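/- arXiv:2208.14921 — 4 statements merged into one kernel-verified Lean document; each statement's English description precedes it below -/
import Mathlib

section
/- Let (G, k, c) be an MHV instance with partial colour function c : S → {1,…,k}, S ⊆ V(G), and k ≥ 1. For each i ∈ {1,…,k} let c_i be the total colouring defined by c_i(v) = c(v) for v ∈ S and c_i(v) = i for v ∉ S, and for a total colouring c' let h(c') denote the number of vertices of G that are happy with respect to c'. Let OPT be the maximum of h(c') over all total colourings c' extending c. Then max_{1 ≤ i ≤ k} h(c_i) ≥ OPT / k; that is, the Greedy-MHV colouring is a 1/k-approximation. -/
open SimpleGraph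

/-- A tree decomposition of a graph `G` over a tree `TG`. -/
structure TreeDecomp {V T : Type*} (G : SimpleGraph V) (TG : SimpleGraph T) where
  isTree : TG.IsTree
  bag : T → Set V
  bags_cover : ∀ v : V, ∃ t : T, v ∈ bag t
  bags_cover_edges : ∀ ⦃u v : V⦄, G.Adj u v → ∃ t : T, u ∈ bag t ∧ v ∈ bag t
  bags_connected : ∀ v : V, (TG.induce {t : T | v ∈ bag t}).Connected

/-- The width of a tree decomposition: the maximum bag size minus one. -/
noncomputable def TreeDecomp.width {V T : Type*} [Fintype T] {G : SimpleGraph V}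
    {TG : SimpleGraph T} (D : TreeDecomp G TG) : ℕ :=
  (Finset.univ.sup fun t : T => (D.bag t).ncard) - 1

/-- In the tree `TG` rooted at `r`, node `t'` is a descendant of `t`
(with `t` counted as its own descendant): every walk from the root `r`
to `t'` passes through `t`. -/
def TreeDesc {T : Type*} (TG : SimpleGraph T) (r t t' : T) : Prop :=
  ∀ p : TG.Walk r t', t ∈ p.support

/-- `t'` is a child of `t` in the tree `TG` rooted at `r`. -/
def TreeChild {T : Type*} (TG : SimpleGraph T) (r t t' : T) : Prop :=
  TG.Adj t t' ∧ TreeDesc TG r t t'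

/-- A leaf node of the rooted tree: a node with no children. -/
def TreeLeafNode {T : Type*} (TG : SimpleGraph T) (r t : T) : Prop :=
  ∀ t', ¬ TreeChild TG r t t'

variable {V T : Type*} {G : SimpleGraph V} {TG : SimpleGraph T}

/-- `V(G_t)`: the vertices of the subgraph `G_t`, namely the union of the
bag of `t` with the bags of all descendants of `t`. -/
def TreeDecomp.VtSet (D : TreeDecomp G TG) (r t : T) : Set V :=
  D.bag t ∪ {v | ∃ t', TreeDesc TG r t t' ∧ v ∈ D.bag t'}

/-- `t` is an introduce node with (unique) child `tc`, introducing `v`. -/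
def TreeDecomp.IsIntroduceAt (D : TreeDecomp G TG) (r t tc : T) (v : V) : Prop :=
  TreeChild TG r t tc ∧ (∀ s, TreeChild TG r t s → s = tc) ∧
    v ∉ D.bag tc ∧ D.bag t = insert v (D.bag tc)

/-- `t` is a forget node with (unique) child `tc`, forgetting `v`. -/
def TreeDecomp.IsForgetAt (D : TreeDecomp G TG) (r t tc : T) (v : V) : Prop :=
  TreeChild TG r t tc ∧ (∀ s, TreeChild TG r t s → s = tc) ∧
    v ∈ D.bag tc ∧ D.bag t = D.bag tc \ {v}

/-- `t` is a join node with (exactly two) children `t₁` and `t₂`,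
whose bags coincide with the bag of `t`. -/
def TreeDecomp.IsJoinAt (D : TreeDecomp G TG) (r t t₁ t₂ : T) : Prop :=
  t₁ ≠ t₂ ∧ TreeChild TG r t t₁ ∧ TreeChild TG r t t₂ ∧
    (∀ s, TreeChild TG r t s → s = t₁ ∨ s = t₂) ∧
    D.bag t = D.bag t₁ ∧ D.bag t = D.bag t₂

/-- A nice tree decomposition rooted at `r`. -/
structure TreeDecomp.IsNice (D : TreeDecomp G TG) (r : T) : Prop where
  root_empty : D.bag r = ∅
  leaf_empty : ∀ t, TreeLeafNode TG r t → D.bag t = ∅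
  node_kinds : ∀ t, ¬ TreeLeafNode TG r t →
    (∃ tc v, D.IsIntroduceAt r t tc v) ∨ (∃ tc v, D.IsForgetAt r t tc v) ∨
      (∃ t₁ t₂, D.IsJoinAt r t t₁ t₂)

/-- A vertex is happy w.r.t. a total colouring if all of its neighbours share its colour. -/
def Happy {k : ℕ} (G : SimpleGraph V) (c : V → Fin k) (v : V) : Prop :=
  ∀ u : V, G.Adj v u → c u = c v

/-- A vertex is happy within the subgraph of `G` induced by `A`
(all of its neighbours inside `A` share its colour). -/
def HappyOn {k : ℕ} (G : SimpleGraph V) (A : Set V) (c : V → Fin k) (v : V) : Prop :=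
  ∀ u ∈ A, G.Adj v u → c u = c v

/-- `c'` extends the partial colouring `c` defined on `S`. -/
def ExtendsOn {k : ℕ} (S : Set V) (c c' : V → Fin k) : Prop :=
  ∀ v ∈ S, c' v = c v

/-- The number of happy vertices of `G` w.r.t. a total colouring. -/
noncomputable def happyCount {k : ℕ} (G : SimpleGraph V) (c : V → Fin k) : ℕ :=
  {v | Happy G c v}.ncard

/-- The treewidth of a (finite) graph: the minimum width of a tree decomposition. -/
noncomputable def treewidth {V : Type*} [Fintype V] (G : SimpleGraph V) : ℕ :=
  sInf {w : ℕ | ∃ (n : ℕ) (TG : SimpleGraph (Fin n)) (D : TreeDecomp G TG), D.width = w}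

/-- A dynamic-programming tuple `τ = [t, c', ℋ]`: a node, a colouring (meaningful on
the bag of the node) and a family `ℋ = (H_i, U_i)_i`. -/
structure MHVTuple (V T : Type*) (k : ℕ) where
  node : T
  col : V → Fin k
  H : Fin k → Set V
  U : Fin k → Set V

/-- A valid tuple: the bag colouring agrees with `c` on `S ∩ X_t`, and `ℋ` is a
partition family with `H_i ∪ U_i = c'⁻¹(i) ∩ X_t` and `H_i ∩ U_i = ∅`. -/
def TreeDecomp.ValidTuple (D : TreeDecomp G TG) {k : ℕ} (S : Set V) (c : V → Fin k)
    (τ : MHVTuple V T k) : Prop :=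
  (∀ v ∈ S ∩ D.bag τ.node, τ.col v = c v) ∧
    (∀ i, τ.H i ∪ τ.U i = {v ∈ D.bag τ.node | τ.col v = i}) ∧
    (∀ i, τ.H i ∩ τ.U i = ∅)

/-- A `τ`-good colouring: it extends the bag colouring `c'` of `τ`, agrees with the
initial partial colouring `c` on `S ∩ V(G_t)`, and makes every vertex of every `H_i`
happy in `G_t`. -/
def TreeDecomp.TauGood (D : TreeDecomp G TG) {k : ℕ} (r : T) (S : Set V) (c : V → Fin k)
    (τ : MHVTuple V T k) (cτ : V → Fin k) : Prop :=
  (∀ v ∈ D.bag τ.node, cτ v = τ.col v) ∧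
    (∀ v ∈ S ∩ D.VtSet r τ.node, cτ v = c v) ∧
    (∀ i, ∀ v ∈ τ.H i, HappyOn G (D.VtSet r τ.node) cτ v)

/-- `Π(τ)`: the maximum over all `τ`-good colourings of the number of vertices of
`V(G_t) \ ⋃ᵢ Uᵢ` that are happy in `G_t`; `−∞ = ⊥` if no `τ`-good colouring exists. -/
noncomputable def TreeDecomp.PiVal (D : TreeDecomp G TG) {k : ℕ} (r : T) (S : Set V)
    (c : V → Fin k) (τ : MHVTuple V T k) : EReal :=
  sSup {x : EReal | ∃ cτ : V → Fin k, D.TauGood r S c τ cτ ∧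
    x = (({v ∈ D.VtSet r τ.node | v ∉ (⋃ i, τ.U i) ∧
      HappyOn G (D.VtSet r τ.node) cτ v}.ncard : ℕ) : EReal)}

/-- Greedy-MHV is a `1/k`-approximation: some constant extension
`c_i` has at least `OPT/k` happy vertices. -/
theorem greedyMHV_approx {V : Type*} [Fintype V] (G : SimpleGraph V) (k : ℕ)
    (hk : 1 ≤ k) (S : Set V) (c : V → Fin k) (ci : Fin k → V → Fin k)
    (hci : ∀ (i : Fin k) (v : V), (v ∈ S → ci i v = c v) ∧ (v ∉ S → ci i v = i)) :
    ∃ i : Fin k, ∀ c' : V → Fin k, ExtendsOn S c c' →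
      happyCount G c' ≤ k * happyCount G (ci i) := by
  classical
  have : NeZero k := ⟨Nat.one_le_iff_ne_zero.mp hk⟩
  obtain ⟨i, -, hi⟩ := Finset.exists_max_image (Finset.univ : Finset (Fin k))
    (fun j => happyCount G (ci j)) ⟨⟨0, hk⟩, Finset.mem_univ _⟩
  refine ⟨i, fun c' hc' => ?_⟩
  have key : ∀ v, Happy G c' v → Happy G (ci (c' v)) v := by
    intro v hv u hadj
    have hcv : ci (c' v) v = c' v := by
      by_cases hvS : v ∈ S
      · rw [(hci _ v).1 hvS, hc' v hvS]
      · exact (hci _ v).2 hvS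
    have hcu : ci (c' v) u = c' v := by
      by_cases huS : u ∈ S
      · rw [(hci _ u).1 huS, ← hc' u huS, hv u hadj]
      · exact (hci _ u).2 huS
    rw [hcu, hcv]
  have hcard : ∀ d : V → Fin k,
      happyCount G d = (Finset.univ.filter (fun v => Happy G d v)).card := by
    intro d
    rw [happyCount, Set.ncard_eq_toFinset_card']
    congr 1
    ext v
    simp
  rw [hcard, hcard]
  calc (Finset.univ.filter (fun v => Happy G c' v)).card
      ≤ (Finset.univ.biUnion fun j : Fin k =>
          Finset.univ.filter (fun v => Happy G (ci j) v)).card := by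
        apply Finset.card_le_card
        intro v hv
        simp only [Finset.mem_filter, Finset.mem_univ, true_and] at hv
        simp only [Finset.mem_biUnion, Finset.mem_filter, Finset.mem_univ, true_and]
        exact ⟨c' v, key v hv⟩
    _ ≤ ∑ j : Fin k, (Finset.univ.filter (fun v => Happy G (ci j) v)).card :=
        Finset.card_biUnion_le
    _ ≤ ∑ _j : Fin k, (Finset.univ.filter (fun v => Happy G (ci i) v)).card := by
        refine Finset.sum_le_sum fun j _ => ?_
        have := hi j (Finset.mem_univ j)
        rwa [hcard, hcard] at this
    _ = k * (Finset.univ.filter (fun v => Happy G (ci i) v)).card := by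
        simp [Finset.sum_const, mul_comm]
end

section
/- Fix a graph G, an integer k ≥ 1, a partial colour function c : S → {1,…,k} with S ⊆ V(G), and a nice tree decomposition (T, 𝒳) of G. Let t be a join node with children t₁ and t₂ (so X_t = X_{t₁} = X_{t₂}). Then for every valid tuple τ = [t, c', ℋ] with ℋ = {(H_i, U_i)}_{i=1}^k, one has Π(t, c', ℋ) = Π(t₁, c', ℋ) + Π(t₂, c', ℋ) − Σ_{i=1}^k |H_i|, with the convention that the right-hand side equals −∞ whenever Π(t₁, c', ℋ) = −∞ or Π(t₂, c', ℋ) = −∞. -/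
open SimpleGraph

variable {V T : Type*} {G : SimpleGraph V} {TG : SimpleGraph T}

/-!
At a join node `t`, `V(G_t) = V(G_{t₁}) ∪ V(G_{t₂})`, the two parts meet exactly in `X_t`, and no
edge of `G` runs between `V(G_{t₁}) \ X_t` and `V(G_{t₂}) \ X_t`. Hence, for a `τ`-good colouring,
the happy vertices of `G_t` outside `⋃ᵢ Uᵢ` are the union of those of `G_{t₁}` and of `G_{t₂}`,
and these two sets overlap exactly in `X_t \ ⋃ᵢ Uᵢ = ⋃ᵢ Hᵢ`. Conversely, `τ`-good colourings of
`G_{t₁}` and `G_{t₂}` agree with `c'` on `X_t` and glue to a `τ`-good colouring of `G_t`. So the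
maximum for `t` is obtained by maximising independently over both children, and
inclusion–exclusion gives the recurrence.
-/

section RootedTree

open Walk

variable {r a b s s' t t₁ t₂ : T}

lemma treeDesc_refl (TG : SimpleGraph T) (r a : T) : TreeDesc TG r a a :=
  fun p => p.end_mem_support

lemma TreeDesc.trans (hab : TreeDesc TG r a b) (hbs : TreeDesc TG r b s) : TreeDesc TG r a s := by
  classical
  exact fun p => p.support_takeUntil_subset_support (hbs p) (hab _)

lemma mem_support_of_not_treeDesc (hs : ¬ TreeDesc TG r a s) (hs' : TreeDesc TG r a s')
    (w : TG.Walk s s') : a ∈ w.support := by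
  obtain ⟨p, hp⟩ : ∃ p : TG.Walk r s, a ∉ p.support := by simpa [TreeDesc] using hs
  simpa [mem_support_append_iff, hp] using hs' (p.append w)

lemma treeDesc_iff_mem_support (hT : TG.IsAcyclic) {p : TG.Walk r b} (hp : p.IsPath) :
    TreeDesc TG r a b ↔ a ∈ p.support := by
  classical
  refine ⟨fun h => h p, fun ha w => ?_⟩
  have hpw : p = w.toPath := congrArg Subtype.val ((hT.subsingleton_path r b).elim ⟨p, hp⟩ _)
  exact w.support_toPath_subset_support (hpw ▸ ha)

lemma TreeDesc.antisymm (hT : TG.IsTree) (hab : TreeDesc TG r a b) (hba : TreeDesc TG r b a) :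
    a = b := by
  classical
  obtain ⟨q, hq⟩ := hT.connected.preconnected.exists_isPath r b
  by_contra hne
  exact endpoint_notMem_support_takeUntil hq (hab q) (Ne.symm hne) (hba _)

lemma TreeChild.eq_snd_dropUntil [DecidableEq T] (hT : TG.IsTree) (h : TreeChild TG r t t₁)
    {q : TG.Walk r a} (hq : q.IsPath) (ht : t ∈ q.support) (ht₁ : t₁ ∈ q.support) :
    t₁ = (q.dropUntil t ht).snd := by
  refine hT.isAcyclic.eq_snd_of_adj_start (hq.dropUntil ht) h.1 ?_
  rw [← q.take_spec ht, mem_support_append_iff] at ht₁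
  refine ht₁.resolve_left fun ht₁' => h.1.ne ?_
  exact h.2.antisymm hT ((treeDesc_iff_mem_support hT.isAcyclic (hq.takeUntil ht)).2 ht₁')

lemma TreeChild.eq_of_treeDesc (hT : TG.IsTree) (h₁ : TreeChild TG r t t₁)
    (h₂ : TreeChild TG r t t₂) (ha₁ : TreeDesc TG r t₁ a) (ha₂ : TreeDesc TG r t₂ a) :
    t₁ = t₂ := by
  classical
  obtain ⟨q, hq⟩ := hT.connected.preconnected.exists_isPath r a
  have ht : t ∈ q.support := h₁.2.trans ha₁ q
  rw [h₁.eq_snd_dropUntil hT hq ht (ha₁ q), h₂.eq_snd_dropUntil hT hq ht (ha₂ q)]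

lemma TreeDesc.exists_treeChild (hT : TG.IsTree) (hd : TreeDesc TG r t a) (hne : t ≠ a) :
    ∃ s, TreeChild TG r t s ∧ TreeDesc TG r s a := by
  classical
  obtain ⟨q, hq⟩ := hT.connected.preconnected.exists_isPath r a
  have ht : t ∈ q.support := hd q
  have hdp : (q.dropUntil t ht).IsPath := hq.dropUntil ht
  cases hd' : q.dropUntil t ht with
  | nil => exact absurd rfl hne
  | @cons _ s _ hadj d =>
    refine ⟨s, ⟨hadj, fun p => ?_⟩, ?_⟩
    · -- `p` followed by the rest of `q` reaches `a`, and `t` does not occur again after `s`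
      have htd : t ∉ d.support := by
        rw [hd'] at hdp
        exact (cons_isPath_iff _ _).1 hdp |>.2
      simpa [mem_support_append_iff, htd] using hd (p.append d)
    · refine (treeDesc_iff_mem_support hT.isAcyclic hq).2
        (q.support_dropUntil_subset_support ht ?_)
      simp [hd']

end RootedTree

namespace TreeDecomp

variable (D : TreeDecomp G TG) {r s s' t t₁ t₂ x : T} {u v : V}

lemma mem_vtSet_iff : v ∈ D.VtSet r x ↔ ∃ s, TreeDesc TG r x s ∧ v ∈ D.bag s := by
  refine ⟨?_, Or.inr⟩
  rintro (h | h)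
  · exact ⟨x, treeDesc_refl TG r x, h⟩
  · exact h

lemma bag_subset_vtSet : D.bag x ⊆ D.VtSet r x := Set.subset_union_left

lemma mem_bag_of_forall_mem_support (hs : v ∈ D.bag s) (hs' : v ∈ D.bag s')
    (hx : ∀ w : TG.Walk s s', x ∈ w.support) : v ∈ D.bag x := by
  obtain ⟨p⟩ := (D.bags_connected v).preconnected ⟨s, hs⟩ ⟨s', hs'⟩
  have hxp : x ∈ p.support.map (Embedding.induce (G := TG) {y | v ∈ D.bag y}).toHom := by
    rw [← Walk.support_map]
    exact hx _
  obtain ⟨y, -, rfl⟩ := List.mem_map.1 hxp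
  exact y.2

lemma mem_bag_of_not_treeDesc (hs : ¬ TreeDesc TG r x s) (hs' : TreeDesc TG r x s')
    (hv : v ∈ D.bag s) (hv' : v ∈ D.bag s') : v ∈ D.bag x :=
  D.mem_bag_of_forall_mem_support hv hv' (mem_support_of_not_treeDesc hs hs')

namespace IsJoinAt

variable {D}

lemma bag_left_eq (hj : D.IsJoinAt r t t₁ t₂) : D.bag t₁ = D.bag t := hj.2.2.2.2.1.symm

lemma bag_right_eq (hj : D.IsJoinAt r t t₁ t₂) : D.bag t₂ = D.bag t := hj.2.2.2.2.2.symm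

lemma bag_subset_vtSet_left (hj : D.IsJoinAt r t t₁ t₂) : D.bag t ⊆ D.VtSet r t₁ :=
  hj.bag_left_eq ▸ D.bag_subset_vtSet

lemma bag_subset_vtSet_right (hj : D.IsJoinAt r t t₁ t₂) : D.bag t ⊆ D.VtSet r t₂ :=
  hj.bag_right_eq ▸ D.bag_subset_vtSet

lemma not_treeDesc_right (hj : D.IsJoinAt r t t₁ t₂) (hs : TreeDesc TG r t₁ s) :
    ¬ TreeDesc TG r t₂ s :=
  fun h => hj.1 (hj.2.1.eq_of_treeDesc D.isTree hj.2.2.1 hs h)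

lemma vtSet_eq_union (hj : D.IsJoinAt r t t₁ t₂) :
    D.VtSet r t = D.VtSet r t₁ ∪ D.VtSet r t₂ := by
  obtain ⟨-, h₁, h₂, hchild, hbag₁, -⟩ := hj
  ext v
  simp only [Set.mem_union, mem_vtSet_iff]
  constructor
  · rintro ⟨s, hs, hv⟩
    by_cases hts : t = s
    · subst hts
      exact Or.inl ⟨t₁, treeDesc_refl TG r t₁, hbag₁ ▸ hv⟩
    · obtain ⟨c, hc, hcs⟩ := hs.exists_treeChild D.isTree hts
      rcases hchild c hc with rfl | rfl
      exacts [Or.inl ⟨s, hcs, hv⟩, Or.inr ⟨s, hcs, hv⟩]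
  · rintro (⟨s, hs, hv⟩ | ⟨s, hs, hv⟩)
    exacts [⟨s, h₁.2.trans hs, hv⟩, ⟨s, h₂.2.trans hs, hv⟩]

lemma vtSet_inter_eq (hj : D.IsJoinAt r t t₁ t₂) :
    D.VtSet r t₁ ∩ D.VtSet r t₂ = D.bag t := by
  refine subset_antisymm ?_ (Set.subset_inter hj.bag_subset_vtSet_left hj.bag_subset_vtSet_right)
  rintro v ⟨hv₁, hv₂⟩
  obtain ⟨s₁, hs₁, hv₁⟩ := (D.mem_vtSet_iff).1 hv₁
  obtain ⟨s₂, hs₂, hv₂⟩ := (D.mem_vtSet_iff).1 hv₂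
  have hns₂ : ¬ TreeDesc TG r t₁ s₂ := fun h => hj.not_treeDesc_right h hs₂
  exact hj.bag_left_eq ▸ D.mem_bag_of_not_treeDesc hns₂ hs₁ hv₂ hv₁

lemma not_adj (hj : D.IsJoinAt r t t₁ t₂) (hu : u ∈ D.VtSet r t₁ \ D.VtSet r t₂)
    (hv : v ∈ D.VtSet r t₂ \ D.VtSet r t₁) : ¬ G.Adj u v := by
  intro huv
  obtain ⟨s₁, hs₁, hu₁⟩ := (D.mem_vtSet_iff).1 hu.1
  obtain ⟨s₂, hs₂, hv₂⟩ := (D.mem_vtSet_iff).1 hv.1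
  obtain ⟨s, hus, hvs⟩ := D.bags_cover_edges huv
  by_cases hs : TreeDesc TG r t₁ s
  · have hvt : v ∈ D.bag t :=
      hj.bag_right_eq ▸ D.mem_bag_of_not_treeDesc (hj.not_treeDesc_right hs) hs₂ hvs hv₂
    exact hv.2 (hj.bag_subset_vtSet_left hvt)
  · have hut : u ∈ D.bag t := hj.bag_left_eq ▸ D.mem_bag_of_not_treeDesc hs hs₁ hus hu₁
    exact hu.2 (hj.bag_subset_vtSet_right hut)

end IsJoinAt

end TreeDecomp

section Happiness

variable {k : ℕ} {A B W Z : Set V} {f g : V → Fin k} {v : V}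

lemma HappyOn.mono (h : HappyOn G W f v) (hA : A ⊆ W) : HappyOn G A f v :=
  fun u hu => h u (hA hu)

lemma happyOn_union : HappyOn G (A ∪ B) f v ↔ HappyOn G A f v ∧ HappyOn G B f v :=
  ⟨fun h => ⟨h.mono Set.subset_union_left, h.mono Set.subset_union_right⟩,
    fun ⟨hA, hB⟩ u hu => hu.elim (hA u) (hB u)⟩

lemma happyOn_union_of_forall_not_adj (h : HappyOn G A f v) (hB : ∀ u ∈ B \ A, ¬ G.Adj v u) :
    HappyOn G (A ∪ B) f v :=
  happyOn_union.2 ⟨h, fun u hu huv => h u (by_contra fun huA => hB u ⟨hu, huA⟩ huv) huv⟩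

lemma happyOn_congr (h : Set.EqOn f g W) (hv : v ∈ W) :
    HappyOn G W f v ↔ HappyOn G W g v :=
  forall₂_congr fun u hu => by rw [h hu, h hv]

/-- For `W = V(G_t)` and `Z = ⋃ᵢ Uᵢ`, these are the vertices counted by `Π`. -/
def happyExcept (G : SimpleGraph V) (W Z : Set V) (f : V → Fin k) : Set V :=
  {v ∈ W | v ∉ Z ∧ HappyOn G W f v}

lemma happyExcept_congr (h : Set.EqOn f g W) : happyExcept G W Z f = happyExcept G W Z g := by
  ext v
  exact and_congr_right fun hv => and_congr_right fun _ => happyOn_congr h hv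

lemma happyExcept_union (hsep : ∀ u ∈ A \ B, ∀ w ∈ B \ A, ¬ G.Adj u w)
    (hAB : ∀ v ∈ (A ∩ B) \ Z, HappyOn G (A ∪ B) f v) :
    happyExcept G (A ∪ B) Z f = happyExcept G A Z f ∪ happyExcept G B Z f := by
  ext v
  constructor
  · rintro ⟨hv | hv, hZ, h⟩
    exacts [Or.inl ⟨hv, hZ, h.mono Set.subset_union_left⟩,
      Or.inr ⟨hv, hZ, h.mono Set.subset_union_right⟩]
  · rintro (⟨hA, hZ, h⟩ | ⟨hB, hZ, h⟩)
    · refine ⟨Or.inl hA, hZ, ?_⟩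
      by_cases hB : v ∈ B
      · exact hAB v ⟨⟨hA, hB⟩, hZ⟩
      · exact happyOn_union_of_forall_not_adj h fun u hu => hsep v ⟨hA, hB⟩ u hu
    · refine ⟨Or.inr hB, hZ, ?_⟩
      by_cases hA : v ∈ A
      · exact hAB v ⟨⟨hA, hB⟩, hZ⟩
      · rw [Set.union_comm]
        exact happyOn_union_of_forall_not_adj h fun u hu huv => hsep u hu v ⟨hB, hA⟩ huv.symm

lemma happyExcept_inter (hAB : ∀ v ∈ (A ∩ B) \ Z, HappyOn G (A ∪ B) f v) :
    happyExcept G A Z f ∩ happyExcept G B Z f = (A ∩ B) \ Z := by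
  ext v
  constructor
  · rintro ⟨⟨hA, hZ, -⟩, hB, -⟩
    exact ⟨⟨hA, hB⟩, hZ⟩
  · intro hv
    obtain ⟨hA, hB⟩ := happyOn_union.1 (hAB v hv)
    exact ⟨⟨hv.1.1, hv.2, hA⟩, hv.1.2, hv.2, hB⟩

lemma ncard_happyExcept_union_add [Finite V] (hsep : ∀ u ∈ A \ B, ∀ w ∈ B \ A, ¬ G.Adj u w)
    (hAB : ∀ v ∈ (A ∩ B) \ Z, HappyOn G (A ∪ B) f v) :
    (happyExcept G (A ∪ B) Z f).ncard + ((A ∩ B) \ Z).ncard =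
      (happyExcept G A Z f).ncard + (happyExcept G B Z f).ncard := by
  rw [happyExcept_union hsep hAB, ← happyExcept_inter hAB, Set.ncard_union_add_ncard_inter]

end Happiness

section NatValuedSup

variable {α : Type*} {P P₁ P₂ : α → Prop} {g g₁ g₂ : α → ℕ}

lemma sSup_natCast_of_not_exists (h : ¬ ∃ a, P a) : sSup {x : EReal | ∃ a, P a ∧ x = g a} = ⊥ := by
  rw [sSup_eq_bot]
  rintro _ ⟨a, ha, -⟩
  exact absurd ⟨a, ha⟩ h

lemma exists_sSup_natCast_eq [Finite α] (h : ∃ a, P a) :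
    ∃ a, P a ∧ (∀ b, P b → g b ≤ g a) ∧ sSup {x : EReal | ∃ b, P b ∧ x = g b} = g a := by
  obtain ⟨a, ha, hmax⟩ := Set.exists_max_image {a | P a} g (Set.toFinite _) h
  refine ⟨a, ha, hmax, IsGreatest.csSup_eq ⟨⟨a, ha, rfl⟩, ?_⟩⟩
  rintro _ ⟨b, hb, rfl⟩
  exact_mod_cast hmax b hb

theorem sSup_natCast_eq_add_sub [Finite α] (n : ℕ)
    (hres : ∀ f, P f → P₁ f ∧ P₂ f ∧ g f + n = g₁ f + g₂ f)
    (hglue : ∀ f₁ f₂, P₁ f₁ → P₂ f₂ → ∃ f, P f ∧ g₁ f = g₁ f₁ ∧ g₂ f = g₂ f₂) :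
    sSup {x : EReal | ∃ f, P f ∧ x = g f} =
      sSup {x : EReal | ∃ f, P₁ f ∧ x = g₁ f} + sSup {x : EReal | ∃ f, P₂ f ∧ x = g₂ f} - n := by
  by_cases h : ∃ f, P f
  · obtain ⟨f, hf⟩ := h
    obtain ⟨a, ha, hmax, hsup⟩ := exists_sSup_natCast_eq (g := g) ⟨f, hf⟩
    obtain ⟨a₁, ha₁, hmax₁, hsup₁⟩ := exists_sSup_natCast_eq (g := g₁) ⟨f, (hres f hf).1⟩
    obtain ⟨a₂, ha₂, hmax₂, hsup₂⟩ := exists_sSup_natCast_eq (g := g₂) ⟨f, (hres f hf).2.1⟩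
    obtain ⟨b, hb, hb₁, hb₂⟩ := hglue a₁ a₂ ha₁ ha₂
    obtain ⟨ha₁', ha₂', hga⟩ := hres a ha
    have hgb := (hres b hb).2.2
    have hval : g a + n = g₁ a₁ + g₂ a₂ := by
      refine le_antisymm (hga ▸ add_le_add (hmax₁ a ha₁') (hmax₂ a ha₂')) ?_
      rw [← hb₁, ← hb₂, ← hgb]
      exact Nat.add_le_add_right (hmax b hb) n
    rw [hsup, hsup₁, hsup₂, ← Nat.cast_add, ← hval, Nat.cast_add]
    exact EReal.add_sub_cancel_right.symm
  · rw [sSup_natCast_of_not_exists h]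
    by_cases h₁ : ∃ f, P₁ f
    · have h₂ : ¬ ∃ f, P₂ f := by
        rintro ⟨f₂, hf₂⟩
        obtain ⟨f₁, hf₁⟩ := h₁
        obtain ⟨f, hf, -⟩ := hglue f₁ f₂ hf₁ hf₂
        exact h ⟨f, hf⟩
      rw [sSup_natCast_of_not_exists h₂, EReal.add_bot, EReal.bot_sub]
    · rw [sSup_natCast_of_not_exists h₁, EReal.bot_add, EReal.bot_sub]

end NatValuedSup

namespace TreeDecomp

variable {D : TreeDecomp G TG} {k : ℕ} {S : Set V} {c col f f₁ f₂ : V → Fin k}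
  {H U : Fin k → Set V} {τ : MHVTuple V T k} {r t t₁ t₂ x : T}

lemma ValidTuple.H_subset (h : D.ValidTuple S c τ) (i : Fin k) :
    τ.H i ⊆ {v ∈ D.bag τ.node | τ.col v = i} :=
  h.2.1 i ▸ Set.subset_union_left

lemma ValidTuple.iUnion_H_eq (h : D.ValidTuple S c τ) :
    ⋃ i, τ.H i = D.bag τ.node \ ⋃ i, τ.U i := by
  ext v
  simp only [Set.mem_iUnion, Set.mem_sdiff, not_exists]
  constructor
  · rintro ⟨i, hi⟩
    obtain ⟨hv, rfl⟩ := h.H_subset i hi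
    refine ⟨hv, fun j hj => ?_⟩
    obtain ⟨-, rfl⟩ : v ∈ {v ∈ D.bag τ.node | τ.col v = j} := h.2.1 j ▸ Or.inr hj
    exact (h.2.2 _).subset ⟨hi, hj⟩
  · rintro ⟨hv, hU⟩
    have hvH : v ∈ τ.H (τ.col v) ∪ τ.U (τ.col v) := h.2.1 _ ▸ ⟨hv, rfl⟩
    exact ⟨_, hvH.resolve_right (hU _)⟩

lemma ValidTuple.ncard_iUnion_H [Finite V] (h : D.ValidTuple S c τ) :
    (⋃ i, τ.H i).ncard = ∑ i, (τ.H i).ncard := by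
  rw [Set.ncard_iUnion_of_finite (fun _ => Set.toFinite _), finsum_eq_sum_of_fintype]
  intro i j hij
  exact Set.disjoint_left.2 fun v hi hj => hij ((h.H_subset i hi).2.symm.trans (h.H_subset j hj).2)

lemma piVal_mk : D.PiVal r S c ⟨x, col, H, U⟩ = sSup {y : EReal | ∃ f,
    D.TauGood r S c ⟨x, col, H, U⟩ f ∧ y = (happyExcept G (D.VtSet r x) (⋃ i, U i) f).ncard} :=
  rfl

lemma TauGood.of_vtSet_subset (h : D.TauGood r S c ⟨t, col, H, U⟩ f) (hbag : D.bag x = D.bag t)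
    (hsub : D.VtSet r x ⊆ D.VtSet r t) : D.TauGood r S c ⟨x, col, H, U⟩ f :=
  ⟨fun v hv => h.1 v (hbag ▸ hv), fun v hv => h.2.1 v ⟨hv.1, hsub hv.2⟩,
    fun i v hv => (h.2.2 i v hv).mono hsub⟩

namespace IsJoinAt

lemma tauGood_left (hj : D.IsJoinAt r t t₁ t₂) (h : D.TauGood r S c ⟨t, col, H, U⟩ f) :
    D.TauGood r S c ⟨t₁, col, H, U⟩ f :=
  h.of_vtSet_subset hj.bag_left_eq (hj.vtSet_eq_union ▸ Set.subset_union_left)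

lemma tauGood_right (hj : D.IsJoinAt r t t₁ t₂) (h : D.TauGood r S c ⟨t, col, H, U⟩ f) :
    D.TauGood r S c ⟨t₂, col, H, U⟩ f :=
  h.of_vtSet_subset hj.bag_right_eq (hj.vtSet_eq_union ▸ Set.subset_union_right)

lemma eqOn_piecewise [DecidablePred (· ∈ D.VtSet r t₁)] (hj : D.IsJoinAt r t t₁ t₂)
    (h₁ : D.TauGood r S c ⟨t₁, col, H, U⟩ f₁) (h₂ : D.TauGood r S c ⟨t₂, col, H, U⟩ f₂) :
    Set.EqOn ((D.VtSet r t₁).piecewise f₁ f₂) f₂ (D.VtSet r t₂) := by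
  intro v hv
  by_cases hv₁ : v ∈ D.VtSet r t₁
  · have hvt : v ∈ D.bag t := hj.vtSet_inter_eq ▸ ⟨hv₁, hv⟩
    rw [Set.piecewise_eq_of_mem _ _ _ hv₁, h₁.1 v (hj.bag_left_eq ▸ hvt),
      h₂.1 v (hj.bag_right_eq ▸ hvt)]
  · exact Set.piecewise_eq_of_notMem _ _ _ hv₁

lemma tauGood_piecewise [DecidablePred (· ∈ D.VtSet r t₁)] (hj : D.IsJoinAt r t t₁ t₂)
    (hH : ∀ i, H i ⊆ D.bag t) (h₁ : D.TauGood r S c ⟨t₁, col, H, U⟩ f₁)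
    (h₂ : D.TauGood r S c ⟨t₂, col, H, U⟩ f₂) :
    D.TauGood r S c ⟨t, col, H, U⟩ ((D.VtSet r t₁).piecewise f₁ f₂) := by
  refine ⟨fun v hv => ?_, fun v ⟨hvS, hv⟩ => ?_, fun i v hv => ?_⟩
  · rw [Set.piecewise_eq_of_mem _ _ _ (hj.bag_subset_vtSet_left hv)]
    exact h₁.1 v (hj.bag_left_eq ▸ hv)
  · rw [hj.vtSet_eq_union] at hv
    by_cases hv₁ : v ∈ D.VtSet r t₁
    · rw [Set.piecewise_eq_of_mem _ _ _ hv₁]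
      exact h₁.2.1 v ⟨hvS, hv₁⟩
    · rw [Set.piecewise_eq_of_notMem _ _ _ hv₁]
      exact h₂.2.1 v ⟨hvS, hv.resolve_left hv₁⟩
  · have hvt : v ∈ D.bag t := hH i hv
    rw [hj.vtSet_eq_union, happyOn_union]
    exact ⟨(happyOn_congr (Set.piecewise_eqOn _ _ _) (hj.bag_subset_vtSet_left hvt)).2
        (h₁.2.2 i v hv),
      (happyOn_congr (hj.eqOn_piecewise h₁ h₂) (hj.bag_subset_vtSet_right hvt)).2 (h₂.2.2 i v hv)⟩

lemma ncard_happyExcept_add [Finite V] (hj : D.IsJoinAt r t t₁ t₂) {Z : Set V}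
    (hZ : ∀ v ∈ D.bag t \ Z, HappyOn G (D.VtSet r t) f v) :
    (happyExcept G (D.VtSet r t) Z f).ncard + (D.bag t \ Z).ncard =
      (happyExcept G (D.VtSet r t₁) Z f).ncard + (happyExcept G (D.VtSet r t₂) Z f).ncard := by
  rw [← hj.vtSet_inter_eq, hj.vtSet_eq_union] at hZ ⊢
  exact ncard_happyExcept_union_add (fun u hu w hw => hj.not_adj hu hw) hZ

end IsJoinAt

end TreeDecomp

theorem piVal_join_node_general {V T : Type*} [Fintype V]
    (G : SimpleGraph V) (TG : SimpleGraph T) (D : TreeDecomp G TG)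
    (k : ℕ) (S : Set V) (c : V → Fin k)
    (r : T) (t t₁ t₂ : T) (hj : D.IsJoinAt r t t₁ t₂)
    (col : V → Fin k) (H U : Fin k → Set V)
    (hvalid : D.ValidTuple S c ⟨t, col, H, U⟩) :
    D.PiVal r S c ⟨t, col, H, U⟩ =
      D.PiVal r S c ⟨t₁, col, H, U⟩ + D.PiVal r S c ⟨t₂, col, H, U⟩
        - ∑ i : Fin k, ((H i).ncard : EReal) := by
  classical
  have hHU : ⋃ i, H i = D.bag t \ ⋃ i, U i := hvalid.iUnion_H_eq
  have hH : ∀ i, H i ⊆ D.bag t := fun i v hv => (hvalid.H_subset i hv).1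
  rw [← Nat.cast_sum, ← hvalid.ncard_iUnion_H, hHU, D.piVal_mk, D.piVal_mk, D.piVal_mk]
  refine sSup_natCast_eq_add_sub _ (fun f hf => ⟨hj.tauGood_left hf, hj.tauGood_right hf, ?_⟩)
    fun f₁ f₂ h₁ h₂ => ⟨_, hj.tauGood_piecewise hH h₁ h₂,
      congrArg _ (happyExcept_congr (Set.piecewise_eqOn _ _ _)),
      congrArg _ (happyExcept_congr (hj.eqOn_piecewise h₁ h₂))⟩
  refine hj.ncard_happyExcept_add fun v hv => ?_
  obtain ⟨i, hi⟩ := Set.mem_iUnion.1 (hHU ▸ hv)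
  exact hf.2.2 i v hi

/-- join node recurrence:
`Π(t, c', ℋ) = Π(t₁, c', ℋ) + Π(t₂, c', ℋ) − Σᵢ |Hᵢ|`, where in `EReal` the
right-hand side is `⊥ = −∞` whenever one of `Π(t₁, c', ℋ)`, `Π(t₂, c', ℋ)` is `⊥`. -/
theorem piVal_join_node {V T : Type*} [Fintype V] [Fintype T]
    (G : SimpleGraph V) (TG : SimpleGraph T) (D : TreeDecomp G TG)
    (k : ℕ) (hk : 1 ≤ k) (S : Set V) (c : V → Fin k)
    (r : T) (hnice : D.IsNice r) (t t₁ t₂ : T) (hj : D.IsJoinAt r t t₁ t₂)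
    (col : V → Fin k) (H U : Fin k → Set V)
    (hvalid : D.ValidTuple S c ⟨t, col, H, U⟩) :
    D.PiVal r S c ⟨t, col, H, U⟩ =
      D.PiVal r S c ⟨t₁, col, H, U⟩ + D.PiVal r S c ⟨t₂, col, H, U⟩
        - ∑ i : Fin k, ((H i).ncard : EReal) :=
  piVal_join_node_general G TG D k S c r t t₁ t₂ hj col H U hvalid
end

section
/- Fix a graph G, an integer k ≥ 1, a partial colour function c : S → {1,…,k} with S ⊆ V(G), and a nice tree decomposition (T, 𝒳) of G. Let t be a forget node with child t̄ and forgotten vertex ṽ, and let τ = [t, c', ℋ] be a valid tuple with ℋ = {(H_i, U_i)}_{i=1}^k. For i ∈ {1,…,k}, let c'_i be the colouring of X_{t̄} extending c' with c'_i(ṽ) = i, and set 𝒞 = {c'_{c(ṽ)}} if ṽ ∈ S and 𝒞 = {c'_i : i ∈ {1,…,k}} otherwise; let ℋ_{i+} (respectively ℋ_{i−}) be obtained from ℋ by adding ṽ to H_i (respectively to U_i). Then Π(τ) = max over c'_i ∈ 𝒞 and ♯ ∈ {+,−} of Π([t̄, c'_i, ℋ_{i♯}]). -/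
open SimpleGraph

variable {V T : Type*} {G : SimpleGraph V} {TG : SimpleGraph T}

section TreeLemmas

variable {T : Type*} {TG : SimpleGraph T}

lemma treeDesc_self (TG : SimpleGraph T) (r t : T) : TreeDesc TG r t t :=
  fun p => p.end_mem_support

lemma treeDesc_trans [DecidableEq T] {r t tc t' : T} (h1 : TreeDesc TG r t tc)
    (h2 : TreeDesc TG r tc t') : TreeDesc TG r t t' := by
  intro p
  have htc := h2 p
  have := h1 (p.takeUntil tc htc)
  exact SimpleGraph.Walk.support_takeUntil_subset p htc this

lemma treeDesc_forget [DecidableEq T] (hT : TG.IsTree) {r t tc t' : T}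
    (hchild : TreeChild TG r t tc) (huniq : ∀ s, TreeChild TG r t s → s = tc)
    (hne : t' ≠ t) (hdesc : TreeDesc TG r t t') : TreeDesc TG r tc t' := by
  obtain ⟨w0⟩ := hT.isConnected.preconnected r t'
  set p : TG.Walk r t' := w0.bypass with hp
  have hpath : p.IsPath := w0.bypass_isPath
  have ht : t ∈ p.support := hdesc p
  -- the part of p after t
  have hdrop : (p.dropUntil t ht).IsPath := hpath.dropUntil ht
  have htcp : tc ∈ p.support := by
    have hnotnil : ¬ (p.dropUntil t ht).Nil := SimpleGraph.Walk.not_nil_of_ne (Ne.symm hne)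
    obtain ⟨s, hadj, q, hq⟩ := SimpleGraph.Walk.not_nil_iff.mp hnotnil
    -- s is a child of t, hence s = tc
    have hqpath : q.IsPath ∧ t ∉ q.support := by
      have := hdrop
      rw [hq, SimpleGraph.Walk.cons_isPath_iff] at this
      exact this
    have hdescs : TreeDesc TG r t s := by
      intro w
      by_contra htw
      have hW : t ∈ (w.append q).support := hdesc (w.append q)
      rw [SimpleGraph.Walk.support_append] at hW
      rcases List.mem_append.mp hW with h | h
      · exact htw h
      · exact hqpath.2 (List.mem_of_mem_tail h)
    have hs : s = tc := huniq s ⟨hadj, hdescs⟩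
    have : s ∈ (p.dropUntil t ht).support := by
      rw [hq]; simp
    rw [hs] at this
    exact SimpleGraph.Walk.support_dropUntil_subset p ht this
  -- now any walk r → t' contains tc, via uniqueness of paths
  intro w
  have hwe : w.bypass = p := by
    obtain ⟨q, -, hquniq⟩ := hT.existsUnique_path r t'
    rw [hquniq _ w.bypass_isPath, hquniq _ hpath]
  have : tc ∈ w.bypass.support := by rw [hwe]; exact htcp
  exact w.support_bypass_subset this

end TreeLemmas

section VtLemmas

variable {V T : Type*} {G : SimpleGraph V} {TG : SimpleGraph T}

lemma VtSet_forget_eq [DecidableEq T] (D : TreeDecomp G TG) {r t tc : T} {vt : V}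
    (hforget : D.IsForgetAt r t tc vt) : D.VtSet r t = D.VtSet r tc := by
  obtain ⟨hchild, huniq, hvtc, hbag⟩ := hforget
  apply Set.eq_of_subset_of_subset
  · rintro v (hv | ⟨t', hdesc, hv⟩)
    · rw [hbag] at hv
      exact Or.inl hv.1
    · by_cases ht' : t' = t
      · subst ht'
        rw [hbag] at hv
        exact Or.inl hv.1
      · exact Or.inr ⟨t', treeDesc_forget D.isTree hchild huniq ht' hdesc, hv⟩
  · rintro v (hv | ⟨t', hdesc, hv⟩)
    · exact Or.inr ⟨tc, hchild.2, hv⟩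
    · exact Or.inr ⟨t', treeDesc_trans hchild.2 hdesc, hv⟩

lemma vt_mem_VtSet (D : TreeDecomp G TG) {r t tc : T} {vt : V}
    (hforget : D.IsForgetAt r t tc vt) : vt ∈ D.VtSet r t :=
  Or.inr ⟨tc, hforget.1.2, hforget.2.2.1⟩

end VtLemmas

/-- forget node recurrence: `Π(τ)` is the maximum, over the
admissible colours `i` for the forgotten vertex `vt` (only `c(vt)` if `vt` is
precoloured, all of `{1,…,k}` otherwise) and over adding `vt` to `H_i` or to
`U_i`, of `Π([t̄, c'_i, ℋ_{i±}])`. -/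
theorem piVal_forget_node {V T : Type*} [Fintype V] [Fintype T] [DecidableEq V]
    (G : SimpleGraph V) (TG : SimpleGraph T) (D : TreeDecomp G TG)
    (k : ℕ) (hk : 1 ≤ k) (S : Set V) (c : V → Fin k)
    (r : T) (hnice : D.IsNice r) (t tc : T) (vt : V)
    (hforget : D.IsForgetAt r t tc vt)
    (col : V → Fin k) (H U : Fin k → Set V)
    (hvalid : D.ValidTuple S c ⟨t, col, H, U⟩) :
    (vt ∈ S →
      D.PiVal r S c ⟨t, col, H, U⟩ =
        max (D.PiVal r S c ⟨tc, Function.update col vt (c vt),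
              fun j => if j = c vt then insert vt (H j) else H j, U⟩)
            (D.PiVal r S c ⟨tc, Function.update col vt (c vt), H,
              fun j => if j = c vt then insert vt (U j) else U j⟩)) ∧
    (vt ∉ S →
      D.PiVal r S c ⟨t, col, H, U⟩ =
        ⨆ i : Fin k,
          max (D.PiVal r S c ⟨tc, Function.update col vt i,
                fun j => if j = i then insert vt (H j) else H j, U⟩)
              (D.PiVal r S c ⟨tc, Function.update col vt i, H,
                fun j => if j = i then insert vt (U j) else U j⟩)) := by
  classical
  obtain ⟨hchild, huniq, hvtc, hbag⟩ := hforget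
  have hforget' : D.IsForgetAt r t tc vt := ⟨hchild, huniq, hvtc, hbag⟩
  have hV : D.VtSet r tc = D.VtSet r t := (VtSet_forget_eq D hforget').symm
  have hvtV : vt ∈ D.VtSet r t := vt_mem_VtSet D hforget'
  have hUnion : ∀ i : Fin k,
      (⋃ j, (if j = i then insert vt (U j) else U j)) = insert vt (⋃ j, U j) := by
    intro i; ext v
    simp only [Set.mem_iUnion, Set.mem_insert_iff]
    constructor
    · rintro ⟨j, hj⟩
      by_cases hji : j = i
      · rw [if_pos hji, Set.mem_insert_iff] at hj
        rcases hj with rfl | hj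
        · exact Or.inl rfl
        · exact Or.inr ⟨j, hj⟩
      · rw [if_neg hji] at hj; exact Or.inr ⟨j, hj⟩
    · rintro (rfl | ⟨j, hj⟩)
      · exact ⟨i, by simp⟩
      · refine ⟨j, ?_⟩
        by_cases hji : j = i
        · rw [if_pos hji]; exact Set.mem_insert_of_mem _ hj
        · rw [if_neg hji]; exact hj
  have hsetU : ∀ cτ : V → Fin k,
      {v ∈ D.VtSet r t | v ∉ insert vt (⋃ j, U j) ∧ HappyOn G (D.VtSet r t) cτ v} =
        {v ∈ D.VtSet r t | v ∉ (⋃ j, U j) ∧ HappyOn G (D.VtSet r t) cτ v} \ {vt} := by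
    intro cτ; ext v
    simp only [Set.mem_setOf_eq, Set.mem_diff, Set.mem_singleton_iff, Set.mem_insert_iff,
      not_or]
    tauto
  -- the `≥` direction, for every colour i
  have hge : ∀ i : Fin k,
      max (D.PiVal r S c ⟨tc, Function.update col vt i,
            fun j => if j = i then insert vt (H j) else H j, U⟩)
          (D.PiVal r S c ⟨tc, Function.update col vt i, H,
            fun j => if j = i then insert vt (U j) else U j⟩) ≤
        D.PiVal r S c ⟨t, col, H, U⟩ := by
    intro i
    apply max_le
    · simp only [TreeDecomp.PiVal]
      apply sSup_le
      rintro x ⟨cτ, hg, rfl⟩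
      apply le_sSup
      refine ⟨cτ, ⟨?_, ?_, ?_⟩, ?_⟩
      · intro v hv
        have hv' : v ∈ D.bag tc ∧ v ≠ vt := by rw [hbag] at hv; exact hv
        have := hg.1 v hv'.1
        simp only [] at this ⊢
        rwa [Function.update_of_ne hv'.2] at this
      · intro v hv
        refine hg.2.1 v ?_
        rwa [← hV] at hv
      · intro j v hv
        simp only [] at hv
        have hv' : v ∈ (if j = i then insert vt (H j) else H j) := by
          by_cases hji : j = i
          · rw [if_pos hji]; exact Set.mem_insert_of_mem _ hv
          · rw [if_neg hji]; exact hv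
        have := hg.2.2 j v hv'
        simp only [] at this ⊢
        rwa [hV] at this
      · rw [hV]
    · simp only [TreeDecomp.PiVal]
      apply sSup_le
      rintro x ⟨cτ, hg, rfl⟩
      refine le_sSup_of_le ⟨cτ, ⟨?_, ?_, ?_⟩, rfl⟩ ?_
      · intro v hv
        have hv' : v ∈ D.bag tc ∧ v ≠ vt := by rw [hbag] at hv; exact hv
        have := hg.1 v hv'.1
        simp only [] at this ⊢
        rwa [Function.update_of_ne hv'.2] at this
      · intro v hv
        refine hg.2.1 v ?_
        rwa [← hV] at hv
      · intro j v hv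
        have := hg.2.2 j v hv
        simp only [] at this ⊢
        rwa [hV] at this
      · rw [hUnion i, hV, hsetU cτ]
        exact_mod_cast Set.ncard_le_ncard Set.diff_subset (Set.toFinite _)
  -- the `≤` direction, for a τ-good colouring cτ, taking i = cτ vt
  have hle : ∀ (cτ : V → Fin k) (i : Fin k),
      D.TauGood r S c ⟨t, col, H, U⟩ cτ → cτ vt = i →
      ((({v ∈ D.VtSet r t | v ∉ (⋃ j, U j) ∧
            HappyOn G (D.VtSet r t) cτ v}).ncard : ℕ) : EReal) ≤
        max (D.PiVal r S c ⟨tc, Function.update col vt i,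
              fun j => if j = i then insert vt (H j) else H j, U⟩)
            (D.PiVal r S c ⟨tc, Function.update col vt i, H,
              fun j => if j = i then insert vt (U j) else U j⟩) := by
    intro cτ i hg hi
    have hcol : ∀ v ∈ D.bag tc, cτ v = Function.update col vt i v := by
      intro v hv
      by_cases hv' : v = vt
      · subst hv'; rw [Function.update_self]; exact hi
      · rw [Function.update_of_ne hv']
        exact hg.1 v (by show v ∈ D.bag t; rw [hbag]; exact ⟨hv, hv'⟩)
    have hS : ∀ v ∈ S ∩ D.VtSet r tc, cτ v = c v := by
      intro v hv
      refine hg.2.1 v ?_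
      rwa [hV] at hv
    by_cases hhap : HappyOn G (D.VtSet r t) cτ vt
    · apply le_max_of_le_left
      simp only [TreeDecomp.PiVal]
      apply le_sSup
      refine ⟨cτ, ⟨hcol, hS, ?_⟩, ?_⟩
      · intro j v hv
        simp only [] at hv ⊢
        rw [hV]
        by_cases hji : j = i
        · rw [if_pos hji, Set.mem_insert_iff] at hv
          rcases hv with rfl | hv
          · exact hhap
          · exact hg.2.2 j v hv
        · rw [if_neg hji] at hv
          exact hg.2.2 j v hv
      · rw [hV]
    · apply le_max_of_le_right
      simp only [TreeDecomp.PiVal]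
      apply le_sSup
      refine ⟨cτ, ⟨hcol, hS, ?_⟩, ?_⟩
      · intro j v hv
        simp only [] at hv ⊢
        have := hg.2.2 j v hv
        rwa [← hV] at this
      · rw [hUnion i, hV, hsetU cτ,
          Set.diff_singleton_eq_self (fun hmem => hhap hmem.2.2)]
  constructor
  · intro hSvt
    apply le_antisymm
    · rw [TreeDecomp.PiVal]
      apply sSup_le
      rintro x ⟨cτ, hg, rfl⟩
      have hcvt : cτ vt = c vt := hg.2.1 vt ⟨hSvt, hvtV⟩
      exact hle cτ (c vt) hg hcvt
    · exact hge (c vt)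
  · intro hSvt
    apply le_antisymm
    · rw [TreeDecomp.PiVal]
      apply sSup_le
      rintro x ⟨cτ, hg, rfl⟩
      exact le_trans (hle cτ (cτ vt) hg rfl)
        (le_iSup (fun i : Fin k =>
          max (D.PiVal r S c ⟨tc, Function.update col vt i,
                fun j => if j = i then insert vt (H j) else H j, U⟩)
              (D.PiVal r S c ⟨tc, Function.update col vt i, H,
                fun j => if j = i then insert vt (U j) else U j⟩)) (cτ vt))
    · exact iSup_le fun i => hge i
end

section
/- Fix a graph G, an integer k ≥ 1, a partial colour function c : S → {1,…,k} with S ⊆ V(G), and a rooted tree decomposition (T, 𝒳) of G with root r. Then G_r = G, and the maximum of Π(τ) over all valid tuples τ = [r, c', ℋ] at the root equals the maximum number of happy vertices of G over all total colourings c' : V(G) → {1,…,k} extending c. -/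
open SimpleGraph

variable {V T : Type*} {G : SimpleGraph V} {TG : SimpleGraph T}

/-- root of the decomposition: `G_r = G` (i.e. `V(G_r) = V(G)`),
and the maximum of `Π(τ)` over all valid tuples at the root equals the maximum
number of happy vertices of `G` over all total colourings extending `c`. -/
theorem piVal_root {V T : Type*} [Fintype V] [Fintype T]
    (G : SimpleGraph V) (TG : SimpleGraph T) (D : TreeDecomp G TG)
    (k : ℕ) (hk : 1 ≤ k) (S : Set V) (c : V → Fin k) (r : T) :
    D.VtSet r r = Set.univ ∧
      sSup {x : EReal | ∃ τ : MHVTuple V T k, τ.node = r ∧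
          D.ValidTuple S c τ ∧ x = D.PiVal r S c τ} =
        sSup {x : EReal | ∃ c' : V → Fin k, ExtendsOn S c c' ∧
          x = ((happyCount G c' : ℕ) : EReal)} := by
  have hV : D.VtSet r r = Set.univ := by
    ext v
    simp only [TreeDecomp.VtSet, Set.mem_union, Set.mem_setOf_eq, Set.mem_univ, iff_true]
    obtain ⟨t, ht⟩ := D.bags_cover v
    exact Or.inr ⟨t, fun p => p.start_mem_support, ht⟩
  refine ⟨hV, le_antisymm ?_ ?_⟩
  · apply sSup_le
    rintro x ⟨τ, hnode, hvalid, rfl⟩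
    apply sSup_le
    rintro x ⟨cτ, hgood, rfl⟩
    have hmem : ∀ v : V, v ∈ D.VtSet r τ.node := by
      rw [hnode, hV]; exact fun v => Set.mem_univ v
    rw [hnode, hV]
    refine le_trans ?_ (le_sSup ⟨cτ, fun v hv => hgood.2.1 v ⟨hv, hmem v⟩, rfl⟩)
    have hsub : {v ∈ (Set.univ : Set V) | v ∉ (⋃ i, τ.U i) ∧
        HappyOn G Set.univ cτ v} ⊆ {v | Happy G cτ v} := by
      rintro v ⟨-, -, hh⟩
      exact fun u hu => hh u (Set.mem_univ u) hu
    have hle : ({v ∈ (Set.univ : Set V) | v ∉ (⋃ i, τ.U i) ∧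
        HappyOn G Set.univ cτ v}.ncard : ℕ) ≤ happyCount G cτ :=
      Set.ncard_le_ncard hsub (Set.toFinite _)
    exact_mod_cast hle
  · apply sSup_le
    rintro x ⟨c', hext, rfl⟩
    set τ : MHVTuple V T k :=
      ⟨r, c', fun i => {v ∈ D.bag r | c' v = i ∧ Happy G c' v},
        fun i => {v ∈ D.bag r | c' v = i ∧ ¬ Happy G c' v}⟩ with hτ
    have hvalid : D.ValidTuple S c τ := by
      refine ⟨fun v hv => hext v hv.1, fun i => ?_, fun i => ?_⟩
      · ext v
        simp only [hτ, Set.mem_union, Set.mem_setOf_eq]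
        tauto
      · ext v
        simp only [hτ, Set.mem_inter_iff, Set.mem_setOf_eq, Set.mem_empty_iff_false]
        tauto
    refine le_trans ?_ (le_sSup ⟨τ, rfl, hvalid, rfl⟩)
    apply le_sSup
    refine ⟨c', ⟨fun v _ => rfl, fun v hv => hext v hv.1,
      fun i v hv u _ hu => hv.2.2 u hu⟩, ?_⟩
    congr 2
    have : {v ∈ D.VtSet r τ.node | v ∉ (⋃ i, τ.U i) ∧
        HappyOn G (D.VtSet r τ.node) c' v} = {v | Happy G c' v} := by
      show {v ∈ D.VtSet r r | _ ∧ _} = _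
      rw [hV]
      ext v
      simp only [Set.mem_setOf_eq, Set.mem_univ, true_and, Set.mem_iUnion, not_exists]
      constructor
      · rintro ⟨-, hh⟩
        exact fun u hu => hh u (Set.mem_univ u) hu
      · intro hh
        refine ⟨fun i hi => ?_, fun u _ hu => hh u hu⟩
        exact hi.2.2 hh
    rw [happyCount, this]
end
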